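/- For the string w = 11221122110001100110011 over the alphabet Σ = {0,1,2}, the templated assembly index satisfies TAI(w) ≤ 11. -/

import Mathlib

/-- `u` is a nonempty contiguous substring (infix) of `w`. -/
def IsSub {α : Type} (w u : List α) : Prop := u ≠ [] ∧ u <:+: w

/-- A canonical assembly plan for `w`: a finite sequence of nonempty substrings of `w`
in which each term is either a single letter or the concatenation (again a substring
of `w`) of two earlier terms, and which contains `w`. -/
def IsCPlan {α : Type} (w : List α) (p : List (List α)) : Prop :=
  (∀ i (h : i < p.length),
      (∃ a : α, p[i]'h = [a]) ∨
      ∃ j k, ∃ hj : j < i, ∃ hk : k < i,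
        p[i]'h = (p[j]'(hj.trans h)) ++ (p[k]'(hk.trans h))) ∧
  (∀ x ∈ p, IsSub w x) ∧
  w ∈ p

/-- The number of composite (join) steps of a canonical plan: the number of terms
that are not single letters. -/
def ccost {α : Type} (p : List (List α)) : ℕ :=
  (p.filter fun x => x.length ≠ 1).length

/-- The canonical assembly index: the minimal number of join steps over all
canonical assembly plans for `w`. -/
noncomputable def ASI {α : Type} (w : List α) : ℕ :=
  sInf {n | ∃ p, IsCPlan w p ∧ ccost p = n}

/-- A block-compressed template for `w`: obtained from a nonempty contiguous substring
of `w` by partitioning it into contiguous nonempty blocks and replacing each block in a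
nonempty proper subset of the blocks by a single wildcard `none`. -/
def IsTemplate {α : Type} (w : List α) (T : List (Option α)) : Prop :=
  ∃ bs : List (List α × Bool),
    (∀ b ∈ bs, b.1 ≠ []) ∧
    IsSub w (bs.map Prod.fst).flatten ∧
    (∃ b ∈ bs, b.2 = true) ∧ (∃ b ∈ bs, b.2 = false) ∧
    T = (bs.map fun b => if b.2 then [(none : Option α)] else b.1.map some).flatten

/-- The object set `O*`: nonempty substrings of `w` (wildcard-free) together with
block-compressed templates for `w`. -/
def Obj {α : Type} (w : List α) (x : List (Option α)) : Prop :=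
  (∃ u : List α, IsSub w u ∧ x = u.map some) ∨ IsTemplate w x

/-- `subst T S u` replaces the symbol of `T` at each position in `S` by the string `u`,
leaving all other positions unchanged. -/
def subst {α : Type} (T : List (Option α)) (S : Finset ℕ) (u : List (Option α)) :
    List (Option α) :=
  ((List.range T.length).map fun i => if i ∈ S then u else [T.getD i none]).flatten

/-- A templated assembly plan for `w`: each term is a monomer (a letter or the
wildcard), or a concatenation in `O*` of two earlier terms, or obtained from an earlier
template `T` and an earlier term `u` by replacing the wildcards at a nonempty set `S`
of wildcard positions of `T` by `u`, with result in `O*`; the plan contains `w`. -/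
def IsTPlan {α : Type} (w : List α) (p : List (List (Option α))) : Prop :=
  (∀ i (h : i < p.length),
      (∃ a : α, p[i]'h = [some a]) ∨ (p[i]'h = [(none : Option α)]) ∨
      (∃ j k, ∃ hj : j < i, ∃ hk : k < i,
        p[i]'h = (p[j]'(hj.trans h)) ++ (p[k]'(hk.trans h)) ∧ Obj w (p[i]'h)) ∨
      (∃ j k, ∃ hj : j < i, ∃ hk : k < i, ∃ S : Finset ℕ,
        IsTemplate w (p[j]'(hj.trans h)) ∧ S.Nonempty ∧
        (∀ q ∈ S, (p[j]'(hj.trans h))[q]? = some none) ∧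
        p[i]'h = subst (p[j]'(hj.trans h)) S (p[k]'(hk.trans h)) ∧ Obj w (p[i]'h))) ∧
  (w.map some) ∈ p

/-- The number of composite steps (concatenations and instantiations) of a templated
plan: the number of terms that are not monomers. -/
def tcost {α : Type} (p : List (List (Option α))) : ℕ :=
  (p.filter fun x => x.length ≠ 1).length

/-- The templated assembly index: the minimal number of composite steps over all
templated assembly plans for `w`. -/
noncomputable def TAI {α : Type} (w : List α) : ℕ :=
  sInf {n | ∃ p, IsTPlan w p ∧ tcost p = n}

/-- The string w = 11221122110001100110011 over the alphabet Σ = {0,1,2}. -/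
def wEx : List (Fin 3) := [1,1,2,2,1,1,2,2,1,1,0,0,0,1,1,0,0,1,1,0,0,1,1]

/-!
The template `11*11*11` is assembled once (in four joins) and then instantiated twice, with
`22` and with `00`, yielding the two ten-letter blocks `1122112211` and `1100110011` for one
step each. Together with `11`, `22`, `00`, `000` and the two final joins
`1122112211 ++ 000 ++ 1100110011` this gives a plan with eleven composite steps.
-/

section TemplatedPlan

variable {α : Type} {w : List α}

def IsTStep (w : List α) (p : List (List (Option α))) (i : ℕ) (h : i < p.length) : Prop :=
  (∃ a : α, p[i]'h = [some a]) ∨ (p[i]'h = [(none : Option α)]) ∨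
  (∃ j k, ∃ hj : j < i, ∃ hk : k < i,
    p[i]'h = (p[j]'(hj.trans h)) ++ (p[k]'(hk.trans h)) ∧ Obj w (p[i]'h)) ∨
  (∃ j k, ∃ hj : j < i, ∃ hk : k < i, ∃ S : Finset ℕ,
    IsTemplate w (p[j]'(hj.trans h)) ∧ S.Nonempty ∧
    (∀ q ∈ S, (p[j]'(hj.trans h))[q]? = some none) ∧
    p[i]'h = subst (p[j]'(hj.trans h)) S (p[k]'(hk.trans h)) ∧ Obj w (p[i]'h))

theorem isTPlan_iff {p : List (List (Option α))} :
    IsTPlan w p ↔ (∀ i (h : i < p.length), IsTStep w p i h) ∧ w.map some ∈ p :=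
  Iff.rfl

namespace IsTStep

variable {p : List (List (Option α))} {i : ℕ} {h : i < p.length}

theorem letter {a : α} (he : p[i] = [some a]) : IsTStep w p i h :=
  Or.inl ⟨a, he⟩

theorem wildcard (he : p[i] = [none]) : IsTStep w p i h :=
  Or.inr <| Or.inl he

theorem concat (j k : ℕ) (hj : j < i) (hk : k < i)
    (he : p[i] = p[j] ++ p[k]) (ho : Obj w p[i]) : IsTStep w p i h :=
  Or.inr <| Or.inr <| Or.inl ⟨j, k, hj, hk, he, ho⟩

theorem instantiate (j k : ℕ) (hj : j < i) (hk : k < i) (S : Finset ℕ)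
    (hT : IsTemplate w p[j]) (hS : S.Nonempty) (hwild : ∀ q ∈ S, p[j][q]? = some none)
    (he : p[i] = subst p[j] S p[k]) (ho : Obj w p[i]) : IsTStep w p i h :=
  Or.inr <| Or.inr <| Or.inr ⟨j, k, hj, hk, S, hT, hS, hwild, he, ho⟩

end IsTStep

theorem obj_map_some (u : List α) (hu : IsSub w u) : Obj w (u.map some) :=
  Or.inl ⟨u, hu, rfl⟩

theorem TAI_le_tcost {p : List (List (Option α))} (hp : IsTPlan w p) : TAI w ≤ tcost p :=
  Nat.sInf_le ⟨p, hp, rfl⟩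

end TemplatedPlan

section Example

theorem isTemplate_wEx_11x : IsTemplate wEx [some 1, some 1, none] :=
  ⟨[([1, 1], false), ([2, 2], true)], by decide, ⟨by decide, by decide⟩,
    by decide, by decide, by decide⟩

theorem isTemplate_wEx_11x11 : IsTemplate wEx [some 1, some 1, none, some 1, some 1] :=
  ⟨[([1, 1], false), ([2, 2], true), ([1, 1], false)], by decide, ⟨by decide, by decide⟩,
    by decide, by decide, by decide⟩

theorem isTemplate_wEx_11x11x11 :
    IsTemplate wEx [some 1, some 1, none, some 1, some 1, none, some 1, some 1] :=
  ⟨[([1, 1], false), ([2, 2], true), ([1, 1], false), ([2, 2], true), ([1, 1], false)],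
    by decide, ⟨by decide, by decide⟩, by decide, by decide, by decide⟩

def wExPlan : List (List (Option (Fin 3))) :=
  [[some 1], [some 2], [some 0], [none],
   [some 1, some 1],                                              -- 4 = 0 ++ 0
   [some 2, some 2],                                              -- 5 = 1 ++ 1
   [some 0, some 0],                                              -- 6 = 2 ++ 2
   [some 1, some 1, none],                                        -- 7 = 4 ++ 3
   [some 1, some 1, none, some 1, some 1],                        -- 8 = 7 ++ 4
   [some 1, some 1, none, some 1, some 1, none, some 1, some 1],  -- 9 = 7 ++ 8
   ([1, 1, 2, 2, 1, 1, 2, 2, 1, 1] : List (Fin 3)).map some,      -- 10 = 9[{2,5} ↦ 5]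
   ([1, 1, 0, 0, 1, 1, 0, 0, 1, 1] : List (Fin 3)).map some,      -- 11 = 9[{2,5} ↦ 6]
   [some 0, some 0, some 0],                                      -- 12 = 6 ++ 2
   ([1, 1, 2, 2, 1, 1, 2, 2, 1, 1, 0, 0, 0] : List (Fin 3)).map some, -- 13 = 10 ++ 12
   wEx.map some]                                                  -- 14 = 13 ++ 11

theorem isTPlan_wExPlan : IsTPlan wEx wExPlan := by
  refine isTPlan_iff.2 ⟨fun i h => ?_, by decide⟩
  simp only [wExPlan, List.length_cons, List.length_nil] at h
  interval_cases i
  · exact .letter rfl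
  · exact .letter rfl
  · exact .letter rfl
  · exact .wildcard rfl
  · exact .concat 0 0 (by omega) (by omega) rfl (obj_map_some [1, 1] ⟨by decide, by decide⟩)
  · exact .concat 1 1 (by omega) (by omega) rfl (obj_map_some [2, 2] ⟨by decide, by decide⟩)
  · exact .concat 2 2 (by omega) (by omega) rfl (obj_map_some [0, 0] ⟨by decide, by decide⟩)
  · exact .concat 4 3 (by omega) (by omega) rfl (.inr isTemplate_wEx_11x)
  · exact .concat 7 4 (by omega) (by omega) rfl (.inr isTemplate_wEx_11x11)
  · exact .concat 7 8 (by omega) (by omega) rfl (.inr isTemplate_wEx_11x11x11)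
  · exact .instantiate 9 5 (by omega) (by omega) {2, 5} isTemplate_wEx_11x11x11 (by decide)
      (fun _ hq => by fin_cases hq <;> rfl) rfl
      (obj_map_some [1, 1, 2, 2, 1, 1, 2, 2, 1, 1] ⟨by decide, by decide⟩)
  · exact .instantiate 9 6 (by omega) (by omega) {2, 5} isTemplate_wEx_11x11x11 (by decide)
      (fun _ hq => by fin_cases hq <;> rfl) rfl
      (obj_map_some [1, 1, 0, 0, 1, 1, 0, 0, 1, 1] ⟨by decide, by decide⟩)
  · exact .concat 6 2 (by omega) (by omega) rfl (obj_map_some [0, 0, 0] ⟨by decide, by decide⟩)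
  · exact .concat 10 12 (by omega) (by omega) rfl
      (obj_map_some [1, 1, 2, 2, 1, 1, 2, 2, 1, 1, 0, 0, 0] ⟨by decide, by decide⟩)
  · exact .concat 13 11 (by omega) (by omega) rfl
      (obj_map_some wEx ⟨by decide, List.infix_refl _⟩)

end Example

/-- For w = 11221122110001100110011 over {0,1,2}, the templated
assembly index satisfies TAI(w) ≤ 11. -/
theorem tai_wEx_le_eleven : TAI wEx ≤ 11 :=
  (TAI_le_tcost isTPlan_wExPlan).trans_eq (by decide)
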